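/- If in addition ξ : ℝ³ → ℝ³ is continuously differentiable with Jacobian matrix J_ξ, then the function t ↦ α_t(ξ(x₀)) is differentiable at t = 0 with derivative det[J_ξ(x₀)B(x₀) | B(x₀) | ξ(x₀)] + det[ξ(x₀) | B(x₀) | J_B(x₀)ξ(x₀)] (this quantity defines the shear of B relative to ξ: B has positive shear when it is negative and negative shear when it is positive). -/

import Mathlib

open Matrix

/-- The determinant of the 3×3 matrix with columns `a`, `b`, `c`. -/
noncomputable def det3 (a b c : Fin 3 → ℝ) : ℝ :=
  ((Matrix.of ![a, b, c])ᵀ).det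

lemma det3_expand (a b c : Fin 3 → ℝ) : det3 a b c =
    a 0 * b 1 * c 2 - a 0 * c 1 * b 2 - b 0 * a 1 * c 2 + b 0 * c 1 * a 2
      + c 0 * a 1 * b 2 - c 0 * b 1 * a 2 := by
  rw [det3, Matrix.det_transpose, Matrix.det_fin_three]
  simp [Matrix.of_apply]
  ring

lemma mulVec_comp (A : Matrix (Fin 3) (Fin 3) ℝ) (v : Fin 3 → ℝ) (i : Fin 3) :
    A.mulVec v i = A i 0 * v 0 + A i 1 * v 1 + A i 2 * v 2 := by
  simp [Matrix.mulVec, dotProduct, Fin.sum_univ_three]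

/-- If `ξ` is continuously differentiable with Jacobian `Jξ`, then
`t ↦ α_t(ξ(x₀))` is differentiable at `t = 0` with derivative
`det[Jξ(x₀)B(x₀) | B(x₀) | ξ(x₀)] + det[ξ(x₀) | B(x₀) | J_B(x₀)ξ(x₀)]`
(the quantity defining the shear of `B` relative to `ξ`). -/
theorem shear_derivative_at_zero
    (B ξ : (Fin 3 → ℝ) → (Fin 3 → ℝ))
    (JB Jξ : (Fin 3 → ℝ) → Matrix (Fin 3) (Fin 3) ℝ)
    (x : ℝ → Fin 3 → ℝ) (x₀ : Fin 3 → ℝ)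
    (M : ℝ → Matrix (Fin 3) (Fin 3) ℝ)
    (hB : ContDiff ℝ 1 B)
    (hJB : ∀ p, HasFDerivAt B (LinearMap.toContinuousLinearMap (Matrix.mulVecLin (JB p))) p)
    (hx : ∀ t, HasDerivAt x (B (x t)) t) (hx0 : x 0 = x₀)
    (hM : ∀ t i j, HasDerivAt (fun s => M s i j) ((JB (x t) * M t) i j) t)
    (hM0 : M 0 = 1)
    (hξ : ContDiff ℝ 1 ξ)
    (hJξ : ∀ p, HasFDerivAt ξ (LinearMap.toContinuousLinearMap (Matrix.mulVecLin (Jξ p))) p) :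
    HasDerivAt (fun t => det3 (ξ (x t)) (B (x t)) ((M t).mulVec (ξ x₀)))
      (det3 ((Jξ x₀).mulVec (B x₀)) (B x₀) (ξ x₀) +
        det3 (ξ x₀) (B x₀) ((JB x₀).mulVec (ξ x₀))) 0 := by
  -- derivative of t ↦ ξ (x t) at 0
  have hA : HasDerivAt (fun t => ξ (x t)) ((Jξ x₀).mulVec (B x₀)) 0 := by
    have := (hJξ (x 0)).comp_hasDerivAt 0 (hx 0)
    simp [hx0] at this; exact this
  have hBc : HasDerivAt (fun t => B (x t)) ((JB x₀).mulVec (B x₀)) 0 := by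
    have := (hJB (x 0)).comp_hasDerivAt 0 (hx 0)
    simp [hx0] at this; exact this
  have ha : ∀ i, HasDerivAt (fun t => ξ (x t) i) (((Jξ x₀).mulVec (B x₀)) i) 0 :=
    fun i => (hasDerivAt_pi.mp hA) i
  have hb : ∀ i, HasDerivAt (fun t => B (x t) i) (((JB x₀).mulVec (B x₀)) i) 0 :=
    fun i => (hasDerivAt_pi.mp hBc) i
  have hc : ∀ i, HasDerivAt (fun t => ((M t).mulVec (ξ x₀)) i)
      (((JB x₀).mulVec (ξ x₀)) i) 0 := by
    intro i
    have h0 : HasDerivAt (fun t => (M t).mulVec (ξ x₀) i)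
        ((JB (x 0) * M 0) i 0 * ξ x₀ 0 + (JB (x 0) * M 0) i 1 * ξ x₀ 1
          + (JB (x 0) * M 0) i 2 * ξ x₀ 2) 0 := by
      simp only [mulVec_comp]
      exact (((hM 0 i 0).mul_const _).add ((hM 0 i 1).mul_const _)).add
        ((hM 0 i 2).mul_const _)
    have : (JB (x 0) * M 0) = JB x₀ := by rw [hM0, hx0, Matrix.mul_one]
    rw [this] at h0
    simpa [mulVec_comp] using h0
  -- set up abbreviations for values at 0
  set a := ξ x₀ with hadef
  set b := B x₀ with hbdef
  set a' := (Jξ x₀).mulVec (B x₀) with ha'def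
  set b' := (JB x₀).mulVec (B x₀) with hb'def
  set c' := (JB x₀).mulVec (ξ x₀) with hc'def
  have hc0 : (M 0).mulVec (ξ x₀) = a := by rw [hM0]; simp [hadef]
  have key : HasDerivAt (fun t =>
      ξ (x t) 0 * B (x t) 1 * ((M t).mulVec (ξ x₀)) 2
        - ξ (x t) 0 * ((M t).mulVec (ξ x₀)) 1 * B (x t) 2
        - B (x t) 0 * ξ (x t) 1 * ((M t).mulVec (ξ x₀)) 2
        + B (x t) 0 * ((M t).mulVec (ξ x₀)) 1 * ξ (x t) 2
        + ((M t).mulVec (ξ x₀)) 0 * ξ (x t) 1 * B (x t) 2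
        - ((M t).mulVec (ξ x₀)) 0 * B (x t) 1 * ξ (x t) 2)
      (det3 a' b a + det3 a b c') 0 := by
    have h := (((((((ha 0).mul (hb 1)).mul (hc 2)).sub
        (((ha 0).mul (hc 1)).mul (hb 2))).sub
        (((hb 0).mul (ha 1)).mul (hc 2))).add
        (((hb 0).mul (hc 1)).mul (ha 2))).add
        (((hc 0).mul (ha 1)).mul (hb 2))).sub
        (((hc 0).mul (hb 1)).mul (ha 2))
    refine h.congr_deriv ?_
    simp only [Pi.mul_apply]
    have hx0a : ξ (x 0) = a := by rw [hx0]
    have hx0b : B (x 0) = b := by rw [hx0]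
    rw [det3_expand, det3_expand, hx0a, hx0b, hc0]
    ring
  have : (fun t => det3 (ξ (x t)) (B (x t)) ((M t).mulVec (ξ x₀))) =
      (fun t =>
      ξ (x t) 0 * B (x t) 1 * ((M t).mulVec (ξ x₀)) 2
        - ξ (x t) 0 * ((M t).mulVec (ξ x₀)) 1 * B (x t) 2
        - B (x t) 0 * ξ (x t) 1 * ((M t).mulVec (ξ x₀)) 2
        + B (x t) 0 * ((M t).mulVec (ξ x₀)) 1 * ξ (x t) 2
        + ((M t).mulVec (ξ x₀)) 0 * ξ (x t) 1 * B (x t) 2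
        - ((M t).mulVec (ξ x₀)) 0 * B (x t) 1 * ξ (x t) 2) := by
    funext t; rw [det3_expand]
  rw [this]
  exact key
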